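/- arXiv:1108.6328 — 2 statements merged into one kernel-verified Lean document; each statement's English description precedes it below -/
import Mathlib

section
/- Invariant of ltbExec: at every state (𝔓, 𝔇) arising during an execution of ltbExec(S, P, W), every σ ∈ 𝔓 is a partial solution for Q^{P,S,c_Match} in W, and 𝔇 is a finite induced subweb of the (S, c_Match, P)-reachable part of W. -/
/-!
Induction over the execution. Data of the discovered part is data of the reachable part,
so augmenting a partial solution by it yields a partial solution. The documents added by an
expansion are obtained by dereferencing the finitely many identifiers bound by that partial
solution; each occurs in a triple matching a pattern of `P`, which `c_Match` follows, so
they are reachable.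
-/

/-- A Web of Linked Data `W = (D, data, adoc)`:
`D` a countable set of documents, `data` assigns each document a finite set of
triples, `adoc` a partial surjective map from identifiers to documents. -/
structure Web (Doc U T : Type) where
  D : Set Doc
  data : Doc → Finset T
  adoc : U → Option Doc
  countable : D.Countable
  adoc_mem : ∀ u d, adoc u = some d → d ∈ D
  adoc_surj : ∀ d ∈ D, ∃ u, adoc u = some d

section
variable {Doc U T TP V A : Type}

/-- All data triples of a Web of Linked Data. -/
def Web.AllData (W : Web Doc U T) : Set T :=
  ⋃ d ∈ W.D, (W.data d : Set T)

/-- `W'` is an induced subweb of `W`. -/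
def InducedSubweb (W' W : Web Doc U T) : Prop :=
  W'.D ⊆ W.D ∧
  (∀ d ∈ W'.D, W'.data d = W.data d) ∧
  (∀ u d, W.adoc u = some d → d ∈ W'.D → W'.adoc u = some d) ∧
  (∀ u d, W'.adoc u = some d → W.adoc u = some d)

/-- `(c,P)`-reachability from a seed set `S` in `W`; `ids t` is the finite set of
identifiers occurring in triple `t`, `c` a reachability criterion. -/
inductive Reachable (W : Web Doc U T) (ids : T → Finset U)
    (c : T → U → Finset TP → Bool) (S : Set U) (P : Finset TP) : Doc → Prop
  | base {u : U} {d : Doc} : u ∈ S → W.adoc u = some d → Reachable W ids c S P d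
  | step {d' : Doc} {t : T} {u : U} {d : Doc} :
      Reachable W ids c S P d' → t ∈ W.data d' → u ∈ ids t →
      c t u P = true → W.adoc u = some d → Reachable W ids c S P d

/-- The set of documents of the `(S,c,P)`-reachable part of `W`. -/
def ReachSet (W : Web Doc U T) (ids : T → Finset U)
    (c : T → U → Finset TP → Bool) (S : Set U) (P : Finset TP) : Set Doc :=
  {d | Reachable W ids c S P d}

/-- All data of the `(S,c,P)`-reachable part of `W`. -/
def ReachData (W : Web Doc U T) (ids : T → Finset U)
    (c : T → U → Finset TP → Bool) (S : Set U) (P : Finset TP) : Set T :=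
  ⋃ d ∈ ReachSet W ids c S P, (W.data d : Set T)

/-- The variables occurring in a set of triple patterns. -/
def varsOf (vars : TP → Finset V) (Q : Finset TP) : Set V :=
  ⋃ tp ∈ (Q : Set TP), (vars tp : Set V)

/-- The result of the conjunctive query `Q^{P,S,c}` over `W`: all valuations `μ`
with `dom μ = vars P` such that `μ[P] ⊆ AllData(R)`, `R` the reachable part.
`app μ tp` applies valuation `μ` to pattern `tp` (yielding a data triple). -/
def QueryResult (W : Web Doc U T) (ids : T → Finset U)
    (c : T → U → Finset TP → Bool) (S : Set U) (P : Finset TP)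
    (vars : TP → Finset V) (app : (V → Option A) → TP → Option T) :
    Set (V → Option A) :=
  { μ | (∀ v, (μ v).isSome ↔ v ∈ varsOf vars P) ∧
        ∀ tp ∈ P, ∃ t ∈ ReachData W ids c S P, app μ tp = some t }

/-- A partial solution `(P₁, μ)` for `Q^{P,S,c}` in `W`. -/
def PartialSolution (W : Web Doc U T) (ids : T → Finset U)
    (c : T → U → Finset TP → Bool) (S : Set U) (P : Finset TP)
    (vars : TP → Finset V) (app : (V → Option A) → TP → Option T)
    (P₁ : Finset TP) (μ : V → Option A) : Prop :=
  P₁ ⊆ P ∧ (∀ v, (μ v).isSome ↔ v ∈ varsOf vars P₁) ∧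
  ∀ tp ∈ P₁, ∃ t ∈ ReachData W ids c S P, app μ tp = some t

/-- `Δ(μ,W)`: documents obtained by dereferencing identifiers bound by `μ`;
`toId a` extracts the identifier from `a` (if `a` is an identifier). -/
def Delta (W : Web Doc U T) (toId : A → Option U) (μ : V → Option A) : Set Doc :=
  {d | ∃ v a u, μ v = some a ∧ toId a = some u ∧ W.adoc u = some d}

/-- `(P₁', μ')` is the `(t,tp)`-augmentation of `(P₁, μ)`. -/
def IsAug [DecidableEq TP] (vars : TP → Finset V)
    (app : (V → Option A) → TP → Option T)
    (P₁ : Finset TP) (μ : V → Option A) (t : T) (tp : TP)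
    (P₁' : Finset TP) (μ' : V → Option A) : Prop :=
  P₁' = insert tp P₁ ∧ app μ' tp = some t ∧
  (∀ tp' ∈ P₁, app μ' tp' = app μ tp') ∧
  (∀ v, (μ' v).isSome ↔ v ∈ varsOf vars P₁')

-- The reachability criterion `c_Match`: follow `u` in `t` iff `t` matches some
-- triple pattern of the query.
open scoped Classical in
noncomputable def cMatch (app : (V → Option A) → TP → Option T) :
    T → U → Finset TP → Bool :=
  fun t _ P => decide (∃ tp ∈ P, ∃ ν : V → Option A, app ν tp = some t)

/-- States `(𝔓, 𝔇)` arising during an execution of `ltbExec(S,P,W)`. -/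
inductive ExecState [DecidableEq TP] (W : Web Doc U T) (toId : A → Option U)
    (S : Set U) (P : Finset TP) (vars : TP → Finset V)
    (app : (V → Option A) → TP → Option T) :
    Set (Finset TP × (V → Option A)) → Web Doc U T → Prop
  | init (W0 : Web Doc U T) :
      InducedSubweb W0 W →
      W0.D = {d | ∃ u ∈ S, W.adoc u = some d} →
      ExecState W toId S P vars app {((∅ : Finset TP), fun _ => none)} W0
  | step {PP : Set (Finset TP × (V → Option A))} {DD : Web Doc U T}
      (P₁ : Finset TP) (μ : V → Option A) (t : T) (tp : TP)
      (P₁' : Finset TP) (μ' : V → Option A) (DD' : Web Doc U T) :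
      ExecState W toId S P vars app PP DD →
      (P₁, μ) ∈ PP → t ∈ DD.AllData → tp ∈ P → tp ∉ P₁ →
      IsAug vars app P₁ μ t tp P₁' μ' →
      (P₁', μ') ∉ PP →
      InducedSubweb DD' W → DD'.D = DD.D ∪ Delta W toId μ' →
      ExecState W toId S P vars app (PP ∪ {(P₁', μ')}) DD'

end

section
variable {Doc U T TP V A : Type}

lemma varsOf_finite (vars : TP → Finset V) (Q : Finset TP) : (varsOf vars Q).Finite :=
  Q.finite_toSet.biUnion fun tp _ => (vars tp).finite_toSet

lemma seedDocs_finite (W : Web Doc U T) {S : Set U} (hS : S.Finite) :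
    {d | ∃ u ∈ S, W.adoc u = some d}.Finite := by
  refine ((hS.image W.adoc).preimage (Option.some_injective _).injOn).subset ?_
  rintro d ⟨u, hu, hd⟩
  exact ⟨u, hu, hd⟩

lemma seedDocs_subset_reachSet {W : Web Doc U T} {ids : T → Finset U}
    {c : T → U → Finset TP → Bool} {S : Set U} {P : Finset TP} :
    {d | ∃ u ∈ S, W.adoc u = some d} ⊆ ReachSet W ids c S P :=
  fun _ ⟨_, hu, hd⟩ => Reachable.base hu hd

lemma delta_finite (W : Web Doc U T) (toId : A → Option U) {μ : V → Option A}
    (hμ : {v | (μ v).isSome}.Finite) : (Delta W toId μ).Finite := by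
  refine ((hμ.image fun v => ((μ v).bind toId).bind W.adoc).preimage
    (Option.some_injective _).injOn).subset ?_
  rintro d ⟨v, a, u, hv, hu, hd⟩
  exact ⟨v, by simp [hv], by simp [hv, hu, hd]⟩

lemma InducedSubweb.allData_subset_reachData {DD W : Web Doc U T} {ids : T → Finset U}
    {c : T → U → Finset TP → Bool} {S : Set U} {P : Finset TP} (hsub : InducedSubweb DD W)
    (hreach : DD.D ⊆ ReachSet W ids c S P) : DD.AllData ⊆ ReachData W ids c S P :=
  Set.iUnion₂_subset fun d hd =>
    hsub.2.1 d hd ▸ Set.subset_biUnion_of_mem (u := fun d => (W.data d : Set T)) (hreach hd)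

section PartialSolution
variable {W : Web Doc U T} {ids : T → Finset U} {c : T → U → Finset TP → Bool} {S : Set U}
  {P : Finset TP} {vars : TP → Finset V} {app : (V → Option A) → TP → Option T}

lemma partialSolution_empty : PartialSolution W ids c S P vars app ∅ fun _ => none :=
  ⟨Finset.empty_subset P, fun v => by simp [varsOf], fun tp htp => absurd htp (by simp)⟩

lemma PartialSolution.finite_dom {P₁ : Finset TP} {μ : V → Option A}
    (hσ : PartialSolution W ids c S P vars app P₁ μ) : {v | (μ v).isSome}.Finite :=
  (varsOf_finite vars P₁).subset fun v hv => (hσ.2.1 v).1 hv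

lemma PartialSolution.augment [DecidableEq TP] {P₁ P₁' : Finset TP} {μ μ' : V → Option A}
    {t : T} {tp : TP} (hσ : PartialSolution W ids c S P vars app P₁ μ) (htp : tp ∈ P)
    (ht : t ∈ ReachData W ids c S P) (haug : IsAug vars app P₁ μ t tp P₁' μ') :
    PartialSolution W ids c S P vars app P₁' μ' := by
  obtain ⟨rfl, happ, happ_old, hdom⟩ := haug
  refine ⟨Finset.insert_subset htp hσ.1, hdom, fun tp' htp' => ?_⟩
  rcases Finset.mem_insert.mp htp' with rfl | htp'
  · exact ⟨t, ht, happ⟩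
  · obtain ⟨t', ht', happ'⟩ := hσ.2.2 tp' htp'
    exact ⟨t', ht', (happ_old tp' htp').trans happ'⟩

lemma PartialSolution.delta_subset_reachSet {toId : A → Option U}
    (hids : ∀ (ν : V → Option A) (tp : TP) (t : T) (v : V) (a : A) (u : U),
      app ν tp = some t → v ∈ vars tp → ν v = some a → toId a = some u → u ∈ ids t)
    {P₁ : Finset TP} {μ : V → Option A}
    (hσ : PartialSolution W ids (cMatch app) S P vars app P₁ μ) :
    Delta W toId μ ⊆ ReachSet W ids (cMatch app) S P := by
  rintro d ⟨v, a, u, hv, hu, hd⟩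
  obtain ⟨tp, htp, hvtp⟩ : ∃ tp ∈ P₁, v ∈ vars tp := by
    simpa [varsOf] using (hσ.2.1 v).1 (by simp [hv])
  obtain ⟨t, ht, happ⟩ := hσ.2.2 tp htp
  obtain ⟨d', hd', htd'⟩ : ∃ d' ∈ ReachSet W ids (cMatch app) S P, t ∈ W.data d' := by
    simpa [ReachData] using ht
  have hmatch : cMatch app t u P = true := by
    simpa [cMatch] using ⟨tp, hσ.1 htp, μ, happ⟩
  exact Reachable.step hd' htd' (hids μ tp t v a u happ hvtp hv hu) hmatch hd

end PartialSolution

end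

/-- Invariant of `ltbExec`: in every reachable execution state
`(𝔓,𝔇)`, every element of `𝔓` is a partial solution for `Q^{P,S,c_Match}` in `W`
and `𝔇` is a finite induced subweb of the `(S,c_Match,P)`-reachable part of `W`. -/
theorem ltbExec_invariant {Doc U T TP V A : Type} [DecidableEq TP]
    (W : Web Doc U T) (ids : T → Finset U) (toId : A → Option U)
    (S : Set U) (hS : S.Finite) (P : Finset TP) (vars : TP → Finset V)
    (app : (V → Option A) → TP → Option T)
    (hids : ∀ (ν : V → Option A) (tp : TP) (t : T) (v : V) (a : A) (u : U),
      app ν tp = some t → v ∈ vars tp → ν v = some a → toId a = some u →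
      u ∈ ids t) :
    ∀ (PP : Set (Finset TP × (V → Option A))) (DD : Web Doc U T),
      ExecState W toId S P vars app PP DD →
      (∀ σ ∈ PP, PartialSolution W ids (cMatch app) S P vars app σ.1 σ.2) ∧
      InducedSubweb DD W ∧ DD.D.Finite ∧
      DD.D ⊆ ReachSet W ids (cMatch app) S P := by
  intro PP DD h
  induction h with
  | init W0 hsub hD =>
    refine ⟨?_, hsub, hD ▸ seedDocs_finite W hS, hD ▸ seedDocs_subset_reachSet⟩
    rintro σ rfl
    exact partialSolution_empty
  | step P₁ μ t tp P₁' μ' DD' _ hmem ht htp _ haug _ hsub' hD' ih =>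
    obtain ⟨hPP, hsub, hfin, hreach⟩ := ih
    have hσ' := (hPP _ hmem).augment htp (hsub.allData_subset_reachData hreach ht) haug
    refine ⟨?_, hsub', ?_, ?_⟩
    · rintro σ (hσ | rfl)
      exacts [hPP σ hσ, hσ']
    · rw [hD']
      exact hfin.union (delta_finite W toId hσ'.finite_dom)
    · rw [hD']
      exact Set.union_subset hreach (hσ'.delta_subset_reachSet hids)
end

section
/- In the monotone expand-and-match computation of a (P,S,c)-machine, every triple on the link traversal tape comes from the reachable part: for every iteration j, the set T_j of data triples encoded on the link traversal tape at the start of iteration j satisfies T_j ⊆ AllData(R), where R is the (S,c,P)-reachable part of W. Consequently every valuation in Ω_j = { μ | dom(μ) = vars(P), μ[P] ⊆ T_j } is a solution: Ω_j ⊆ Q^{P,S,c}(W). -/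
section
variable {Doc U T TP V A : Type} {W : Web Doc U T} {ids : T → Finset U}
  {c : T → U → Finset TP → Bool} {S : Set U} {P : Finset TP}

/-- The paper's `T_j`: the link traversal tape at the start of iteration `j`. -/
def tapeData (W : Web Doc U T) (u : ℕ → U) (j : ℕ) : Set T :=
  {t | ∃ m < j, ∃ d, W.adoc (u m) = some d ∧ t ∈ W.data d}

/-- The order in which a `(P,S,c)`-machine dereferences identifiers. -/
def IsDerefSeq (W : Web Doc U T) (ids : T → Finset U) (c : T → U → Finset TP → Bool)
    (S : Set U) (P : Finset TP) (u : ℕ → U) : Prop :=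
  ∀ n, u n ∈ S ∨ ∃ m < n, ∃ d t, W.adoc (u m) = some d ∧
    t ∈ W.data d ∧ u n ∈ ids t ∧ c t (u n) P = true

theorem Reachable.mem_reachData {d : Doc} {t : T} (hd : Reachable W ids c S P d)
    (ht : t ∈ W.data d) : t ∈ ReachData W ids c S P :=
  Set.mem_biUnion hd ht

theorem reachable_of_adoc_deref {u : ℕ → U} (hseq : IsDerefSeq W ids c S P u) (n : ℕ) {d : Doc} (hd : W.adoc (u n) = some d) : Reachable W ids c S P d := by
  induction n using Nat.strong_induction_on generalizing d with
  | _ n ih =>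
    rcases hseq n with hseed | ⟨m, hmn, d', t, hd', ht, hut, hc⟩
    · exact .base hseed hd
    · exact .step (ih m hmn hd') ht hut hc hd

theorem tapeData_subset_reachData {u : ℕ → U} (hseq : IsDerefSeq W ids c S P u) (j : ℕ) : tapeData W u j ⊆ ReachData W ids c S P := by
  rintro t ⟨m, -, d, hd, ht⟩
  exact (reachable_of_adoc_deref hseq m hd).mem_reachData ht

theorem mem_queryResult_of_subset_reachData {vars : TP → Finset V}
    {app : (V → Option A) → TP → Option T} {X : Set T} {μ : V → Option A}
    (hX : X ⊆ ReachData W ids c S P) (hdom : ∀ v, (μ v).isSome ↔ v ∈ varsOf vars P)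
    (hmatch : ∀ tp ∈ P, ∃ t ∈ X, app μ tp = some t) :
    μ ∈ QueryResult W ids c S P vars app :=
  ⟨hdom, fun tp htp => (hmatch tp htp).imp fun _ ⟨ht, happ⟩ => ⟨hX ht, happ⟩⟩

end

/-- In the computation of a `(P,S,c)`-machine, modelled by an
admissible dereferencing sequence `u`, every triple on the link traversal tape
comes from the reachable part, and hence every valuation in `Ω_j` is a solution. -/
theorem machine_tape_sound {Doc U T TP V A : Type}
    (W : Web Doc U T) (ids : T → Finset U) (c : T → U → Finset TP → Bool)
    (S : Set U) (P : Finset TP) (vars : TP → Finset V)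
    (app : (V → Option A) → TP → Option T) (u : ℕ → U)
    (hseq : ∀ n, u n ∈ S ∨ ∃ m < n, ∃ d t, W.adoc (u m) = some d ∧
      t ∈ W.data d ∧ u n ∈ ids t ∧ c t (u n) P = true) :
    (∀ j, {t | ∃ m < j, ∃ d, W.adoc (u m) = some d ∧ t ∈ W.data d} ⊆
      ReachData W ids c S P) ∧
    (∀ (j : ℕ) (μ : V → Option A),
      ((∀ v, (μ v).isSome ↔ v ∈ varsOf vars P) ∧
       ∀ tp ∈ P, ∃ t ∈ {t | ∃ m < j, ∃ d, W.adoc (u m) = some d ∧ t ∈ W.data d},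
         app μ tp = some t) →
      μ ∈ QueryResult W ids c S P vars app) := by
  have htape : ∀ j, tapeData W u j ⊆ ReachData W ids c S P :=
    tapeData_subset_reachData hseq
  exact ⟨htape, fun j _ ⟨hdom, hmatch⟩ =>
    mem_queryResult_of_subset_reachData (htape j) hdom hmatch⟩
end
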